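/- Let p = 4k+1 be a prime and R a commutative ring of characteristic 2. For i = 0,1,2 let a_i, b_i, c_i ∈ R, set Q_i = Q_p(a_i,b_i,c_i), let A_0, A_1, A_2 be p×p circulant matrices over R, and let M be the 3p×6p block matrix with block rows (Q_0 Q_1 Q_2 | A_0 A_1 A_2), (Q_2 Q_0 Q_1 | A_2 A_0 A_1), (Q_1 Q_2 Q_0 | A_1 A_2 A_0). Then the code C generated by the rows of M is self-orthogonal if and only if both: (1) Σ_{i=0}^{2} A_i A_i^T = Q_p( Σ_{i=0}^{2} a_i^2 , Σ_{i=0}^{2} (b_i^2 + k(b_i^2 + c_i^2)) , Σ_{i=0}^{2} (c_i^2 + k(b_i^2 + c_i^2)) ); and (2) Σ_{i=0}^{2} A_i A_{[i+2]_3}^T = Q_p( Σ_{i=0}^{2} a_i a_{[i+2]_3} , Σ_{i=0}^{2} ( a_i b_{[i+2]_3} + b_i a_{[i+2]_3} + (k+1) b_i b_{[i+2]_3} + k (b_i c_{[i+2]_3} + c_i b_{[i+2]_3}) + k c_i c_{[i+2]_3} ) , Σ_{i=0}^{2} ( a_i c_{[i+2]_3} + c_i a_{[i+2]_3} + k b_i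 b_{[i+2]_3} + k (b_i c_{[i+2]_3} + c_i b_{[i+2]_3}) + (k+1) c_i c_{[i+2]_3} ) ). -/

import Mathlib

open Matrix
open scoped Classical

/-- The quadratic residue circulant matrix `Q_p(a,b,c)`: the `p × p` matrix over `R`,
indexed by `ZMod p`, whose `(i,j)` entry is `a` if `i = j`, `b` if `j - i` is a
nonzero quadratic residue modulo `p`, and `c` otherwise. -/
noncomputable def Qmat (p : ℕ) {R : Type*} [CommRing R] (a b c : R) :
    Matrix (ZMod p) (ZMod p) R :=
  Matrix.of fun i j => if i = j then a else if IsSquare (j - i) then b else c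

/-- The `3×3` block circulant matrix `CIRC(B 0, B 1, B 2)` whose block rows are
`(B 0, B 1, B 2)`, `(B 2, B 0, B 1)`, `(B 1, B 2, B 0)`. -/
def blockCirc {R n : Type*} (B : ZMod 3 → Matrix n n R) :
    Matrix (ZMod 3 × n) (ZMod 3 × n) R :=
  Matrix.of fun ix jy => B (jy.1 - ix.1) ix.2 jy.2

/-- The `3p × 6p` block matrix with block rows `(Q 0, Q 1, Q 2 | A 0, A 1, A 2)`,
`(Q 2, Q 0, Q 1 | A 2, A 0, A 1)`, `(Q 1, Q 2, Q 0 | A 1, A 2, A 0)`. -/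
def Mblk {R n : Type*} (Q A : ZMod 3 → Matrix n n R) :
    Matrix (ZMod 3 × n) ((ZMod 3 × n) ⊕ (ZMod 3 × n)) R :=
  Matrix.fromCols (blockCirc Q) (blockCirc A)

/-!
Self-orthogonality of the row span of `M` means `M * Mᵀ = 0`, and `M * Mᵀ` is block circulant
with blocks `∑ m, Q m * (Q (m - d))ᵀ + ∑ m, A m * (A (m - d))ᵀ`. The block for `d = 2` is the
transpose of the one for `d = 1`, and in characteristic 2 the vanishing of a block says that its
`A`-part equals its `Q`-part. Since `-1` is a square mod `p`, every `Q_p(a,b,c)` is symmetric, and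
it equals `(a - c) • 1 + (b - c) • S + c • J` with `S` the adjacency matrix of the Paley graph and
`J` the all-ones matrix. Modulo 2 we have `S * J = J * S = 0`, `J * J = J` and
`S * S = S + k • (J - 1)`: the entry `(i, j)` of `S * S` counts the `l` with `l - i` and `j - l`
nonzero squares, the reflection `l ↦ i + j - l` pairs these off, and its fixed point `(i + j) / 2`
is counted iff `(j - i) / 2` is a nonzero square, i.e. iff `j ≠ i` and (`j - i` is a square iff
`2` is, iff `k` is even). Multiplying out in the basis `1, S, J` gives `Q_p(a,b,c) * Q_p(a',b',c')`.
-/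

theorem CharTwo.sum_eq_of_involutive {α R : Type*} [Fintype α] [DecidableEq α] [Ring R]
    [CharP R 2] {g : α → α} (hg : Function.Involutive g) {x₀ : α}
    (hfix : ∀ x, g x = x ↔ x = x₀) {φ : α → R} (hφ : ∀ x, φ (g x) = φ x) :
    ∑ x, φ x = φ x₀ := by
  rw [Fintype.sum_eq_add_sum_compl x₀, add_eq_left]
  have hmoved : ∀ x ∈ ({x₀}ᶜ : Finset α), g x ≠ x := fun x hx =>
    (hfix x).not.mpr (by simpa using hx)
  refine Finset.sum_involution (fun x _ => g x) (fun x _ => by rw [hφ, CharTwo.add_self_eq_zero])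
    (fun x hx _ => hmoved x hx) (fun x hx => ?_) (fun x _ => hg x)
  rw [Finset.mem_compl, Finset.mem_singleton, ← hfix, hg x]
  exact (hmoved x hx).symm

theorem CharTwo.sum_eq_apply_div_two_of_reflect {F R : Type*} [Field F] [Fintype F] [Ring R]
    [CharP R 2] (h2 : (2 : F) ≠ 0) (c : F) {φ : F → R} (hφ : ∀ x, φ (c - x) = φ x) :
    ∑ x, φ x = φ (c / 2) :=
  CharTwo.sum_eq_of_involutive (sub_sub_cancel c) (fun x => by
    rw [eq_div_iff h2, mul_two, sub_eq_iff_eq_add, eq_comm]) hφ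

theorem isSquare_div_iff {F : Type*} [Field F] [Fintype F] {x y : F} (hx : x ≠ 0) (hy : y ≠ 0) :
    IsSquare (x / y) ↔ (IsSquare x ↔ IsSquare y) := by
  have hxy : x / y ≠ 0 := div_ne_zero hx hy
  have hmul : quadraticChar F (x / y) * quadraticChar F y = quadraticChar F x := by
    rw [← map_mul, div_mul_cancel₀ x hy]
  rw [← quadraticChar_one_iff_isSquare hx, ← quadraticChar_one_iff_isSquare hy,
    ← quadraticChar_one_iff_isSquare hxy, ← hmul]
  rcases quadraticChar_dichotomy hxy with h | h <;>
    rcases quadraticChar_dichotomy hy with h' | h' <;> simp [h, h']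

theorem isSquare_neg_iff_of_isSquare_neg_one {α : Type*} [CommRing α] (h : IsSquare (-1 : α))
    (x : α) : IsSquare (-x) ↔ IsSquare x :=
  ⟨fun hx => by simpa using h.mul hx, fun hx => by simpa using h.mul hx⟩

theorem ZMod.two_ne_zero_of_ne_two {p : ℕ} [Fact p.Prime] (hp : p ≠ 2) : (2 : ZMod p) ≠ 0 :=
  Ring.two_ne_zero (by rwa [ZMod.ringChar_zmod_n])

theorem ZMod.isSquare_two_iff_even {p k : ℕ} [Fact p.Prime] (hpk : p = 4 * k + 1) :
    IsSquare (2 : ZMod p) ↔ Even k := by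
  rw [ZMod.exists_sq_eq_two_iff (by omega), Nat.even_iff]
  omega

def allOnes (n R : Type*) [One R] : Matrix n n R := of fun _ _ => 1

theorem allOnes_mul_allOnes {n R : Type*} [Fintype n] [Semiring R] :
    allOnes n R * allOnes n R = (Fintype.card n : R) • allOnes n R := by
  ext i j
  simp [allOnes, mul_apply]

noncomputable def paleyAdj (p : ℕ) (R : Type*) [CommRing R] : Matrix (ZMod p) (ZMod p) R :=
  Qmat p 0 1 0

section Qmat

variable {p : ℕ} {R : Type*} [CommRing R]

theorem Qmat_apply (a b c : R) (i j : ZMod p) :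
    Qmat p a b c i j = if j - i = 0 then a else if IsSquare (j - i) then b else c := by
  by_cases h : i = j <;> simp [Qmat, h, sub_eq_zero, Ne.symm]

theorem Qmat_apply_of_sub_eq (a b c : R) {i j i' j' : ZMod p} (h : j - i = j' - i') :
    Qmat p a b c i j = Qmat p a b c i' j' := by
  rw [Qmat_apply, Qmat_apply, h]

theorem Qmat_eq_smul_add (a b c : R) :
    Qmat p a b c = (a - c) • 1 + (b - c) • paleyAdj p R + c • allOnes (ZMod p) R := by
  ext i j
  simp only [Qmat, paleyAdj, allOnes, Matrix.add_apply, Matrix.smul_apply, one_apply, of_apply,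
    smul_eq_mul]
  split_ifs <;> ring

theorem Qmat_sum {ι : Type*} (s : Finset ι) (a b c : ι → R) :
    ∑ i ∈ s, Qmat p (a i) (b i) (c i) = Qmat p (∑ i ∈ s, a i) (∑ i ∈ s, b i) (∑ i ∈ s, c i) := by
  ext x y
  simp only [Matrix.sum_apply, Qmat, of_apply]
  split_ifs <;> rfl

theorem Qmat_transpose [Fact p.Prime] (hp : p % 4 ≠ 3) (a b c : R) :
    (Qmat p a b c)ᵀ = Qmat p a b c := by
  ext i j
  simp only [transpose_apply, Qmat_apply, ← neg_sub j i, neg_eq_zero,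
    isSquare_neg_iff_of_isSquare_neg_one (ZMod.exists_sq_eq_neg_one_iff.mpr hp)]
  split_ifs <;> rfl

theorem paleyAdj_transpose [Fact p.Prime] (hp : p % 4 ≠ 3) : (paleyAdj p R)ᵀ = paleyAdj p R :=
  Qmat_transpose hp 0 1 0

end Qmat

section CharTwo

variable {R : Type*} [CommRing R] [CharP R 2]

theorem allOnes_mul_allOnes_of_odd {n : Type*} [Fintype n] (hn : Odd (Fintype.card n)) :
    allOnes n R * allOnes n R = allOnes n R := by
  rw [allOnes_mul_allOnes, CharTwo.natCast_eq_ite, if_neg (Nat.not_even_iff_odd.mpr hn), one_smul]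

variable {p : ℕ} [Fact p.Prime]

theorem paleyAdj_mul_allOnes (hp : p % 4 = 1) : paleyAdj p R * allOnes (ZMod p) R = 0 := by
  ext i j
  have h2 := ZMod.two_ne_zero_of_ne_two (p := p) (by omega)
  have hrow : ∑ l, paleyAdj p R i l = paleyAdj p R i i := by
    rw [CharTwo.sum_eq_apply_div_two_of_reflect h2 (i + i), ← two_mul, mul_div_cancel_left₀ i h2]
    intro l
    calc paleyAdj p R i (i + i - l) = paleyAdj p R l i := Qmat_apply_of_sub_eq _ _ _ (by ring)
      _ = paleyAdj p R i l := congrFun (congrFun (paleyAdj_transpose (by omega)) i) l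
  simpa [mul_apply, allOnes, paleyAdj, Qmat] using hrow

theorem allOnes_mul_paleyAdj (hp : p % 4 = 1) : allOnes (ZMod p) R * paleyAdj p R = 0 := by
  have h := congrArg transpose (paleyAdj_mul_allOnes (R := R) hp)
  rwa [transpose_mul, paleyAdj_transpose (by omega), transpose_zero] at h

variable {k : ℕ}

theorem paleyAdj_mul_self (hpk : p = 4 * k + 1) :
    paleyAdj p R * paleyAdj p R = paleyAdj p R + (k : R) • (allOnes (ZMod p) R - 1) := by
  ext i j
  have h2 := ZMod.two_ne_zero_of_ne_two (p := p) (by omega)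
  have hmid : (paleyAdj p R * paleyAdj p R) i j = paleyAdj p R 0 ((j - i) / 2) := by
    rw [mul_apply, CharTwo.sum_eq_apply_div_two_of_reflect h2 (i + j)]
    · simp only [paleyAdj, Qmat_apply]
      rw [show (i + j) / 2 - i = (j - i) / 2 - 0 by field_simp; ring,
        show j - (i + j) / 2 = (j - i) / 2 - 0 by field_simp; ring]
      split_ifs <;> simp
    · intro l
      rw [mul_comm]
      congr 1 <;> exact Qmat_apply_of_sub_eq _ _ _ (by ring)
  rw [hmid]
  simp only [paleyAdj, allOnes, Qmat_apply, Matrix.add_apply, Matrix.smul_apply, Matrix.sub_apply,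
    one_apply, of_apply, smul_eq_mul, sub_zero]
  by_cases hd : j - i = 0
  · simp [(sub_eq_zero.mp hd).symm]
  · have hij : i ≠ j := fun h => hd (by rw [h, sub_self])
    have hhalf : IsSquare ((j - i) / 2) ↔ (IsSquare (j - i) ↔ Even k) := by
      rw [isSquare_div_iff hd h2, ZMod.isSquare_two_iff_even hpk]
    rw [if_neg (div_ne_zero hd h2), if_neg hd, if_neg hij, CharTwo.natCast_eq_ite]
    by_cases hsq : IsSquare (j - i) <;> by_cases hk : Even k <;>
      simp [hhalf, hsq, hk, CharTwo.add_self_eq_zero]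

theorem Qmat_mul (hpk : p = 4 * k + 1) (a b c a' b' c' : R) :
    Qmat p a b c * Qmat p a' b' c' =
      Qmat p (a * a')
        (a * b' + b * a' + ((k : R) + 1) * (b * b') + k * (b * c' + c * b') + k * (c * c'))
        (a * c' + c * a' + k * (b * b') + k * (b * c' + c * b') + ((k : R) + 1) * (c * c')) := by
  have hp : p % 4 = 1 := by omega
  have hJJ : allOnes (ZMod p) R * allOnes (ZMod p) R = allOnes (ZMod p) R :=
    allOnes_mul_allOnes_of_odd (by rw [ZMod.card]; exact ⟨2 * k, by omega⟩)
  rw [Qmat_eq_smul_add a b c, Qmat_eq_smul_add a' b' c', Qmat_eq_smul_add (a * a')]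
  simp only [add_mul, mul_add, smul_mul_smul_comm, mul_one, one_mul, paleyAdj_mul_self hpk,
    paleyAdj_mul_allOnes hp, allOnes_mul_paleyAdj hp, hJJ, smul_zero, add_zero]
  match_scalars <;> simp only [CharTwo.sub_eq_add] <;> ring_nf <;> reduce_mod_char!

end CharTwo

section Blocks

variable {R : Type*} [CommRing R]

theorem forall_dotProduct_span_rows_eq_zero_iff {m n : Type*} [Fintype n] (M : Matrix m n R) :
    (∀ x ∈ Submodule.span R (Set.range fun i => M i),
      ∀ y ∈ Submodule.span R (Set.range fun i => M i), x ⬝ᵥ y = 0) ↔ M * Mᵀ = 0 := by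
  constructor
  · intro h
    ext i j
    exact h _ (Submodule.subset_span ⟨i, rfl⟩) _ (Submodule.subset_span ⟨j, rfl⟩)
  · intro h x hx y hy
    induction hx, hy using Submodule.span_induction₂ with
    | mem_mem u v hu hv =>
      obtain ⟨i, rfl⟩ := hu
      obtain ⟨j, rfl⟩ := hv
      exact congrFun (congrFun h i) j
    | zero_left => exact zero_dotProduct _
    | zero_right => exact dotProduct_zero _
    | add_left u v w _ _ _ hu hv => rw [add_dotProduct, hu, hv, add_zero]
    | add_right u v w _ _ _ hv hw => rw [dotProduct_add, hv, hw, add_zero]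
    | smul_left r u v _ _ h => rw [smul_dotProduct, h, smul_zero]
    | smul_right r u v _ _ h => rw [dotProduct_smul, h, smul_zero]

variable {n : Type*}

theorem blockCirc_eq_zero_iff [Nonempty n] (B : ZMod 3 → Matrix n n R) :
    blockCirc B = 0 ↔ ∀ d, B d = 0 := by
  refine ⟨fun h d => ?_, fun h => ?_⟩
  · ext x y
    simpa [blockCirc] using congrFun (congrFun h (0, x)) (d, y)
  · ext ix jy
    simp [blockCirc, h]

variable [Fintype n]

theorem blockCirc_mul_transpose (B C : ZMod 3 → Matrix n n R) :
    blockCirc B * (blockCirc C)ᵀ = blockCirc fun d => ∑ m, B m * (C (m - d))ᵀ := by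
  ext ⟨i, x⟩ ⟨j, y⟩
  simp only [blockCirc, mul_apply, transpose_apply, of_apply, Matrix.sum_apply,
    Fintype.sum_prod_type]
  refine Fintype.sum_equiv (Equiv.subRight i) _ _ fun l => ?_
  simp only [Equiv.subRight_apply, sub_sub_sub_cancel_right]

theorem Mblk_mul_transpose (Q A : ZMod 3 → Matrix n n R) :
    Mblk Q A * (Mblk Q A)ᵀ =
      blockCirc fun d => ∑ m, Q m * (Q (m - d))ᵀ + ∑ m, A m * (A (m - d))ᵀ := by
  rw [Mblk, transpose_fromCols, fromCols_mul_fromRows, blockCirc_mul_transpose,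
    blockCirc_mul_transpose]
  rfl

theorem transpose_sum_mul_transpose_add {G : Type*} [AddCommGroup G] [Fintype G]
    (X : G → Matrix n n R) (d : G) :
    (∑ m, X m * (X (m + d))ᵀ)ᵀ = ∑ m, X m * (X (m - d))ᵀ := by
  rw [transpose_sum]
  refine Fintype.sum_equiv (Equiv.addRight d) _ _ fun m => ?_
  rw [transpose_mul, transpose_transpose, Equiv.coe_addRight, add_sub_cancel_right]

theorem forall_sum_mul_transpose_add_eq_zero_iff [DecidableEq n] [Nonempty n] [CharP R 2]
    (X Y : ZMod 3 → Matrix n n R) :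
    (∀ d, ∑ m, X m * (X (m - d))ᵀ + ∑ m, Y m * (Y (m - d))ᵀ = 0) ↔
      ∑ m, Y m * (Y m)ᵀ = ∑ m, X m * (X m)ᵀ ∧
        ∑ m, Y m * (Y (m + 2))ᵀ = ∑ m, X m * (X (m + 2))ᵀ := by
  have hsub_one : ∀ m : ZMod 3, m - 1 = m + 2 := by decide
  simp only [CharTwo.add_eq_zero, eq_comm (a := ∑ m, X m * _)]
  refine ⟨fun h => ⟨by simpa using h 0, by simpa [hsub_one] using h 1⟩, ?_⟩
  rintro ⟨h0, h1⟩ d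
  obtain rfl | rfl | rfl : d = 0 ∨ d = 1 ∨ d = 2 := by revert d; decide
  · simpa using h0
  · simpa [hsub_one] using h1
  · rw [← transpose_sum_mul_transpose_add, ← transpose_sum_mul_transpose_add, h1]

end Blocks

theorem stmt6_general {R : Type*} [CommRing R] [CharP R 2] (p k : ℕ) [Fact (Nat.Prime p)]
    (hpk : p = 4 * k + 1) (a b c : ZMod 3 → R)
    (A : ZMod 3 → Matrix (ZMod p) (ZMod p) R) :
    (∀ x ∈ Submodule.span R
        (Set.range fun i => Mblk (fun i => Qmat p (a i) (b i) (c i)) A i),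
      ∀ y ∈ Submodule.span R
        (Set.range fun i => Mblk (fun i => Qmat p (a i) (b i) (c i)) A i),
        dotProduct x y = 0) ↔
      (∑ i : ZMod 3, A i * (A i)ᵀ =
        Qmat p (∑ i : ZMod 3, (a i) ^ 2)
          (∑ i : ZMod 3, ((b i) ^ 2 + (k : R) * ((b i) ^ 2 + (c i) ^ 2)))
          (∑ i : ZMod 3, ((c i) ^ 2 + (k : R) * ((b i) ^ 2 + (c i) ^ 2))) ∧
       ∑ i : ZMod 3, A i * (A (i + 2))ᵀ =
        Qmat p (∑ i : ZMod 3, a i * a (i + 2))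
          (∑ i : ZMod 3, (a i * b (i + 2) + b i * a (i + 2) + ((k : R) + 1) * (b i * b (i + 2)) +
            (k : R) * (b i * c (i + 2) + c i * b (i + 2)) + (k : R) * (c i * c (i + 2))))
          (∑ i : ZMod 3, (a i * c (i + 2) + c i * a (i + 2) + (k : R) * (b i * b (i + 2)) +
            (k : R) * (b i * c (i + 2) + c i * b (i + 2)) +
            ((k : R) + 1) * (c i * c (i + 2))))) := by
  have hsymm : ∀ a b c : R, (Qmat p a b c)ᵀ = Qmat p a b c := Qmat_transpose (by omega)
  rw [forall_dotProduct_span_rows_eq_zero_iff, Mblk_mul_transpose, blockCirc_eq_zero_iff,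
    forall_sum_mul_transpose_add_eq_zero_iff]
  simp only [hsymm, Qmat_mul hpk, Qmat_sum]
  congr! 4 <;> ring_nf <;> reduce_mod_char!

theorem stmt6 {R : Type*} [CommRing R] [CharP R 2] (p k : ℕ) [Fact (Nat.Prime p)]
    (hpk : p = 4 * k + 1) (a b c : ZMod 3 → R)
    (A : ZMod 3 → Matrix (ZMod p) (ZMod p) R)
    (hA : ∀ i, ∃ v : ZMod p → R, A i = Matrix.circulant v) :
    (∀ x ∈ Submodule.span R
        (Set.range fun i => Mblk (fun i => Qmat p (a i) (b i) (c i)) A i),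
      ∀ y ∈ Submodule.span R
        (Set.range fun i => Mblk (fun i => Qmat p (a i) (b i) (c i)) A i),
        dotProduct x y = 0) ↔
      (∑ i : ZMod 3, A i * (A i)ᵀ =
        Qmat p (∑ i : ZMod 3, (a i) ^ 2)
          (∑ i : ZMod 3, ((b i) ^ 2 + (k : R) * ((b i) ^ 2 + (c i) ^ 2)))
          (∑ i : ZMod 3, ((c i) ^ 2 + (k : R) * ((b i) ^ 2 + (c i) ^ 2))) ∧
       ∑ i : ZMod 3, A i * (A (i + 2))ᵀ =
        Qmat p (∑ i : ZMod 3, a i * a (i + 2))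
          (∑ i : ZMod 3, (a i * b (i + 2) + b i * a (i + 2) + ((k : R) + 1) * (b i * b (i + 2)) +
            (k : R) * (b i * c (i + 2) + c i * b (i + 2)) + (k : R) * (c i * c (i + 2))))
          (∑ i : ZMod 3, (a i * c (i + 2) + c i * a (i + 2) + (k : R) * (b i * b (i + 2)) +
            (k : R) * (b i * c (i + 2) + c i * b (i + 2)) +
            ((k : R) + 1) * (c i * c (i + 2))))) :=
  stmt6_general p k hpk a b c A
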